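/- For the Wishart family W_p(W | S, n) locally parameterized by S = 2(f(b_t+δ)+c)·B_t Exp(M) Exp(M)ᵀ B_tᵀ and n = 2(f(b_t+δ)+c) with c = (p−1)/2, the mixed Fisher information block between δ and M vanishes at (δ, M) = 0, using that E[W] = n S⁻¹ so that E[B_tᵀ W B_t] = I at the evaluation point. -/

import Mathlib

/-!
With `E = single i j 1`, Jacobi's formula `log det (exp (t • E)) = t * tr E` makes the
`M_ij`-derivative of the log-density at `M = 0` equal to
`n(δ) * (tr E - tr ((E + Eᵀ) * (Bᵀ * W * B)) / 2)`, so `δ` enters only through the factor `n(δ)`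
and the mixed derivative is `n'(0)` times that bracket. Since `E[W] = (B * Bᵀ)⁻¹` we have
`E[Bᵀ * W * B] = 1`, and the bracket has mean `tr E - tr (E + Eᵀ) / 2 = 0`. The entries of `W`
are integrable because the diagonal ones have nonzero mean and positive definiteness gives
`|W a b| ≤ (W a a + W b b) / 2`.
-/

open Matrix MeasureTheory Real

/-- Partial derivative of `f` with respect to the `(i,j)` entry of a matrix at `M`. -/
noncomputable def mderiv {p : ℕ} (i j : Fin p)
    (f : Matrix (Fin p) (Fin p) ℝ → ℝ) (M : Matrix (Fin p) (Fin p) ℝ) : ℝ :=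
  deriv (fun t => f (Matrix.of fun a b => if a = i ∧ b = j then t else M a b)) (M i j)

/-- Degrees of freedom `n(δ) = 2(f(b_t + δ) + c)` with `f` the softplus and
`c = (p−1)/2`. -/
noncomputable def wishartN (p : ℕ) (bt δ : ℝ) : ℝ :=
  2 * (Real.log (1 + Real.exp (bt + δ)) + ((p : ℝ) - 1) / 2)

/-- Scale parameter `S(δ, M) = n(δ) · B Exp(M) Exp(M)ᵀ Bᵀ`. -/
noncomputable def wishartS {p : ℕ} (bt : ℝ) (B : Matrix (Fin p) (Fin p) ℝ)
    (δ : ℝ) (M : Matrix (Fin p) (Fin p) ℝ) : Matrix (Fin p) (Fin p) ℝ :=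
  wishartN p bt δ • (B * NormedSpace.exp M * (NormedSpace.exp M)ᵀ * Bᵀ)

/-- Log-density of the Wishart `W_p(W | S(δ,M), n(δ))`, with an arbitrary
normalizing function `Z` of `n`. -/
noncomputable def wishartLogDensity {p : ℕ} (bt : ℝ) (B : Matrix (Fin p) (Fin p) ℝ)
    (Z : ℝ → ℝ) (δ : ℝ) (M : Matrix (Fin p) (Fin p) ℝ)
    (W : Matrix (Fin p) (Fin p) ℝ) : ℝ :=
  -(1/2 : ℝ) * (wishartS bt B δ M * W).trace
    + ((wishartN p bt δ - (p : ℝ) - 1) / 2) * Real.log W.det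
    + (wishartN p bt δ / 2) * Real.log ((wishartS bt B δ M).det)
    - Real.log (Z (wishartN p bt δ))

theorem NormedSpace.exp_eq_one_add_of_mul_self_eq_zero {𝔸 : Type*} [Ring 𝔸] [Algebra ℚ 𝔸]
    [TopologicalSpace 𝔸] [IsTopologicalRing 𝔸] {a : 𝔸} (ha : a * a = 0) :
    NormedSpace.exp a = 1 + a := by
  have hpow : ∀ n ∉ Finset.range 2, ((n.factorial : ℚ)⁻¹ • a ^ n) = 0 := by
    intro n hn
    obtain ⟨k, rfl⟩ := Nat.exists_eq_add_of_le (not_lt.mp (Finset.mem_range.not.mp hn))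
    rw [pow_add, sq, ha, zero_mul, smul_zero]
  rw [NormedSpace.exp_eq_tsum_rat]
  beta_reduce
  rw [tsum_eq_sum hpow]
  simp [Finset.sum_range_succ]

namespace Matrix

variable {n : Type*} [Fintype n] [DecidableEq n]

theorem exp_smul_single_of_ne {i j : n} (hij : i ≠ j) (t : ℝ) :
    NormedSpace.exp (t • single i j (1 : ℝ)) = transvection i j t := by
  rw [NormedSpace.exp_eq_one_add_of_mul_self_eq_zero (by simp [hij.symm]), transvection]
  simp

theorem det_exp_smul_single (i j : n) (t : ℝ) :
    (NormedSpace.exp (t • single i j (1 : ℝ))).det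
      = Real.exp (t * (single i j (1 : ℝ)).trace) := by
  rcases eq_or_ne i j with rfl | hij
  · rw [smul_single, smul_eq_mul, mul_one, ← diagonal_single, exp_diagonal, det_diagonal,
      trace_single_eq_same, mul_one, Pi.exp_def, ← Real.exp_eq_exp_ℝ, ← Real.exp_sum]
    simp
  · rw [exp_smul_single_of_ne hij, det_transvection_of_ne i j hij,
      trace_single_eq_of_ne i j (1 : ℝ) hij, mul_zero, Real.exp_zero]

open scoped Norms.Operator in
theorem hasDerivAt_trace_exp_smul_mul_transpose_mul (E C : Matrix n n ℝ) :
    HasDerivAt (fun t : ℝ => (NormedSpace.exp (t • E) * (NormedSpace.exp (t • E))ᵀ * C).trace)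
      ((E + Eᵀ) * C).trace 0 := by
  have hexp (A : Matrix n n ℝ) : HasDerivAt (fun t : ℝ => NormedSpace.exp (t • A)) A 0 := by
    have h := hasDerivAt_exp_smul_const' (𝕂 := ℝ) A (0 : ℝ)
    rw [zero_smul, NormedSpace.exp_zero, mul_one] at h
    exact h
  have hprod := ((hexp E).mul (hexp Eᵀ)).mul_const C
  simp only [zero_smul, NormedSpace.exp_zero, mul_one, one_mul] at hprod
  have hT (t : ℝ) : (NormedSpace.exp (t • E))ᵀ = NormedSpace.exp (t • Eᵀ) := by
    rw [← exp_transpose, transpose_smul]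
  simp only [hT]
  exact (traceLinearMap n ℝ ℝ).toContinuousLinearMap.hasFDerivAt.comp_hasDerivAt 0 hprod

theorem PosSemidef.abs_apply_le {M : Matrix n n ℝ} (hM : M.PosSemidef) (a b : n) :
    |M a b| ≤ (M a a + M b b) / 2 := by
  have hsymm : M b a = M a b := by simpa using congr_fun₂ hM.isHermitian a b
  have hquad (s : ℝ) : 0 ≤ M a a + 2 * s * M a b + s ^ 2 * M b b := by
    have h := hM.dotProduct_mulVec_nonneg (Pi.single a 1 + s • Pi.single b 1)
    simp [mulVec_add, mulVec_smul, add_dotProduct, dotProduct_add, single_dotProduct,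
      hsymm] at h
    linarith
  rw [abs_le]
  constructor <;> nlinarith [hquad 1, hquad (-1)]

theorem posDef_mul_transpose_self {B : Matrix n n ℝ} (hB : IsUnit B) : (B * Bᵀ).PosDef := by
  simpa [conjTranspose_eq_transpose_of_trivial] using
    PosDef.mul_conjTranspose_self B (vecMul_injective_iff_isUnit.mpr hB)

theorem transpose_mul_inv_mul_transpose_mul_eq_one {α : Type*} [CommRing α] {B : Matrix n n α}
    (hB : IsUnit B) : Bᵀ * (B * Bᵀ)⁻¹ * B = 1 := by
  have hdet : IsUnit B.det := (isUnit_iff_isUnit_det B).mp hB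
  rw [mul_inv_rev, ← Matrix.mul_assoc, mul_nonsing_inv _ (by rwa [det_transpose]), Matrix.one_mul,
    nonsing_inv_mul _ hdet]

end Matrix

section

variable {n : Type*} [Fintype n] {μ : Measure (n → n → ℝ)}

theorem integrable_linearMap_of (f : Matrix n n ℝ →ₗ[ℝ] ℝ)
    (hint : ∀ a b, Integrable (fun W => W a b) μ) :
    Integrable (fun W => f (of W)) μ :=
  (f ∘ₗ (ofLinearEquiv ℝ).toLinearMap).toContinuousLinearMap.integrable_comp
    (Integrable.of_eval fun a => Integrable.of_eval (hint a))

theorem integral_linearMap_of (f : Matrix n n ℝ →ₗ[ℝ] ℝ)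
    (hint : ∀ a b, Integrable (fun W => W a b) μ) :
    ∫ W, f (of W) ∂μ = f (of (∫ W, W ∂μ)) :=
  (f ∘ₗ (ofLinearEquiv ℝ).toLinearMap).toContinuousLinearMap.integral_comp_comm
    (Integrable.of_eval fun a => Integrable.of_eval (hint a))

theorem integral_apply_apply (hint : ∀ a b, Integrable (fun W => W a b) μ) (a b : n) :
    (∫ W, W ∂μ) a b = ∫ W, W a b ∂μ := by
  rw [eval_integral (fun a => Integrable.of_eval (hint a)), eval_integral (hint a)]

variable [DecidableEq n]

theorem integrable_apply_of_ae_posSemidef (hpsd : ∀ᵐ W ∂μ, (of W).PosSemidef)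
    (hdiag : ∀ a, Integrable (fun W => W a a) μ) (a b : n) :
    Integrable (fun W => W a b) μ :=
  (((hdiag a).add (hdiag b)).div_const 2).mono'
    ((continuous_apply b).comp (continuous_apply a)).aestronglyMeasurable <| by
    filter_upwards [hpsd] with W hW
    simpa using hW.abs_apply_le a b

theorem integrable_apply_of_integral_apply_eq_posDef (hpsd : ∀ᵐ W ∂μ, (of W).PosSemidef)
    {m : Matrix n n ℝ} (hm : m.PosDef) (hmean : ∀ a b, ∫ W, W a b ∂μ = m a b) (a b : n) :
    Integrable (fun W => W a b) μ :=
  integrable_apply_of_ae_posSemidef hpsd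
    (fun a => .of_integral_ne_zero (by rw [hmean]; exact hm.diag_pos.ne')) a b

end

section

variable {p : ℕ} (bt : ℝ) (B : Matrix (Fin p) (Fin p) ℝ)

theorem wishartN_pos (hp : 0 < p) (δ : ℝ) : 0 < wishartN p bt δ := by
  have hlog : 0 < Real.log (1 + Real.exp (bt + δ)) :=
    Real.log_pos (by linarith [Real.exp_pos (bt + δ)])
  have hp' : (1 : ℝ) ≤ p := by exact_mod_cast hp
  rw [wishartN]
  linarith

theorem trace_wishartS_mul (δ : ℝ) (M W : Matrix (Fin p) (Fin p) ℝ) :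
    (wishartS bt B δ M * W).trace
      = wishartN p bt δ * (NormedSpace.exp M * (NormedSpace.exp M)ᵀ * (Bᵀ * W * B)).trace := by
  set X := NormedSpace.exp M * (NormedSpace.exp M)ᵀ
  rw [wishartS, smul_mul, trace_smul, smul_eq_mul,
    show B * NormedSpace.exp M * (NormedSpace.exp M)ᵀ * Bᵀ * W = B * (X * (Bᵀ * W)) by
      simp only [X, Matrix.mul_assoc], trace_mul_comm]
  simp only [Matrix.mul_assoc]

theorem det_wishartS (δ : ℝ) (M : Matrix (Fin p) (Fin p) ℝ) :
    (wishartS bt B δ M).det = wishartN p bt δ ^ p * B.det ^ 2 * (NormedSpace.exp M).det ^ 2 := by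
  rw [wishartS, det_smul, det_mul, det_mul, det_mul, det_transpose, det_transpose, Fintype.card_fin]
  ring

/-- `hE` is Jacobi's formula `det (exp (t • E)) = exp (t * tr E)`;
`Matrix.det_exp_smul_single` proves it for the matrix units. -/
theorem hasDerivAt_wishartLogDensity_smul (hp : 0 < p) (hB : IsUnit B) (Z : ℝ → ℝ) (δ : ℝ)
    {E : Matrix (Fin p) (Fin p) ℝ}
    (hE : ∀ t : ℝ, (NormedSpace.exp (t • E)).det = Real.exp (t * E.trace))
    (W : Matrix (Fin p) (Fin p) ℝ) :
    HasDerivAt (fun t : ℝ => wishartLogDensity bt B Z δ (t • E) W)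
      (wishartN p bt δ * (E.trace - ((E + Eᵀ) * (Bᵀ * W * B)).trace / 2)) 0 := by
  have hK : wishartN p bt δ ^ p * B.det ^ 2 ≠ 0 :=
    mul_ne_zero (pow_ne_zero _ (wishartN_pos bt hp δ).ne')
      (pow_ne_zero _ ((isUnit_iff_isUnit_det B).mp hB).ne_zero)
  have hlogdet (t : ℝ) : Real.log (wishartS bt B δ (t • E)).det
      = Real.log (wishartN p bt δ ^ p * B.det ^ 2) + 2 * (t * E.trace) := by
    rw [det_wishartS, hE, Real.log_mul hK (by positivity), Real.log_pow, Real.log_exp]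
    push_cast
    ring
  have hlin : HasDerivAt
      (fun t : ℝ => Real.log (wishartN p bt δ ^ p * B.det ^ 2) + 2 * (t * E.trace))
      (2 * E.trace) 0 := by
    simpa using ((hasDerivAt_id (0 : ℝ)).mul_const E.trace).const_mul 2
      |>.const_add (Real.log (wishartN p bt δ ^ p * B.det ^ 2))
  have htrace := (hasDerivAt_trace_exp_smul_mul_transpose_mul E (Bᵀ * W * B)).const_mul
    (wishartN p bt δ) |>.const_mul (-(1 / 2))
  simp only [wishartLogDensity, trace_wishartS_mul, hlogdet]
  exact ((htrace.add_const _).add (hlin.const_mul (wishartN p bt δ / 2))).sub_const _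
    |>.congr_deriv (by ring)

theorem mderiv_zero_eq_deriv_smul_single (i j : Fin p) (f : Matrix (Fin p) (Fin p) ℝ → ℝ) :
    mderiv i j f 0 = deriv (fun t : ℝ => f (t • single i j 1)) 0 := by
  have hpath (t : ℝ) : (of fun a b => if a = i ∧ b = j then t else 0)
      = t • single i j 1 := by
    ext a b
    simp [single, eq_comm]
  simp only [mderiv, Matrix.zero_apply, hpath]

theorem mderiv_wishartLogDensity_zero (hB : IsUnit B) (Z : ℝ → ℝ) (i j : Fin p) (δ : ℝ)
    (W : Matrix (Fin p) (Fin p) ℝ) :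
    mderiv i j (fun M => wishartLogDensity bt B Z δ M W) 0
      = wishartN p bt δ * ((single i j (1 : ℝ)).trace
          - ((single i j 1 + (single i j 1)ᵀ) * (Bᵀ * W * B)).trace / 2) := by
  rw [mderiv_zero_eq_deriv_smul_single,
    (hasDerivAt_wishartLogDensity_smul bt B i.pos hB Z δ (det_exp_smul_single i j) W).deriv]

theorem wishartN_smul_inv_wishartS_zero (hp : 0 < p) (hB : IsUnit B) :
    wishartN p bt 0 • (wishartS bt B 0 0)⁻¹ = (B * Bᵀ)⁻¹ := by
  have hn := (wishartN_pos bt hp 0).ne'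
  have hdet : IsUnit (B * Bᵀ).det :=
    (isUnit_iff_isUnit_det _).mp (posDef_mul_transpose_self hB).isUnit
  let _ := invertibleOfNonzero hn
  rw [wishartS, NormedSpace.exp_zero, transpose_one, Matrix.mul_one, Matrix.mul_one,
    Matrix.inv_smul _ _ hdet, smul_smul, mul_invOf_self, one_smul]

end

/-- For the Wishart family locally parameterized by
`S = 2(f(b_t+δ)+c) · B_t Exp(M) Exp(M)ᵀ B_tᵀ`, `n = 2(f(b_t+δ)+c)`, the mixed
Fisher information block between `δ` and `M` vanishes at `(δ, M) = 0`, using that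
`E[W] = n S⁻¹` at the evaluation point. -/
theorem wishart_fisher_mixed_block_vanishes {p : ℕ} (bt : ℝ)
    (B : Matrix (Fin p) (Fin p) ℝ) (hB : IsUnit B)
    (μ : Measure (Fin p → Fin p → ℝ)) [IsProbabilityMeasure μ]
    (hsupp : ∀ᵐ W ∂μ, (Matrix.of W).PosDef)
    (hE : ∀ a b : Fin p,
      (∫ W, W a b ∂μ) = (wishartN p bt 0 • (wishartS bt B 0 0)⁻¹) a b)
    (Z : ℝ → ℝ) (i j : Fin p) :
    ∫ W, deriv
        (fun δ => mderiv i j (fun M => wishartLogDensity bt B Z δ M (Matrix.of W)) 0) 0 ∂μ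
      = 0 := by
  simp_rw [mderiv_wishartLogDensity_zero bt B hB Z i j, deriv_mul_const_field]
  rw [wishartN_smul_inv_wishartS_zero bt B i.pos hB] at hE
  have hint := integrable_apply_of_integral_apply_eq_posDef (hsupp.mono fun _ hW => hW.posSemidef)
    (posDef_mul_transpose_self hB).inv hE
  have hmean : of (∫ W, W ∂μ) = (B * Bᵀ)⁻¹ := by
    ext a b
    rw [of_apply, integral_apply_apply hint, hE]
  set E := single i j (1 : ℝ)
  let traceTerm : Matrix (Fin p) (Fin p) ℝ →ₗ[ℝ] ℝ := traceLinearMap _ ℝ ℝ ∘ₗ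
    LinearMap.mulLeft ℝ (E + Eᵀ) ∘ₗ LinearMap.mulRight ℝ B ∘ₗ LinearMap.mulLeft ℝ Bᵀ
  have htrace : ∫ W, traceTerm (of W) ∂μ = (E + Eᵀ).trace := by
    rw [integral_linearMap_of traceTerm hint]
    simp [traceTerm, hmean, transpose_mul_inv_mul_transpose_mul_eq_one hB]
  change ∫ W, deriv (wishartN p bt) 0 * (E.trace - traceTerm (of W) / 2) ∂μ = 0
  rw [integral_const_mul, integral_sub (integrable_const _)
    ((integrable_linearMap_of traceTerm hint).div_const 2), integral_const, integral_div, htrace,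
    trace_add, trace_transpose]
  simp
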